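/- arXiv:1805.05096 — 3 statements merged into one kernel-verified Lean document; each statement's English description precedes it below -/
import Mathlib

section
/- There exist a number of users r, an SNR ρ > 0, and channel row vectors such that adding an antenna strictly decreases the capacity under power control B. Concretely: there exist an n×r complex matrix H and a row vector h such that log₂ det(I_r + (ρ·r/(n+1))·H'ᴴ·H') < log₂ det(I_r + (ρ·r/n)·Hᴴ·H), where H' is H with row h appended. -/
open Matrix

/-- Under power control B (power factor `ρ·r/N_TS`), adding an antenna can
strictly decrease the capacity: the set function is not monotone. -/
theorem powerControlB_not_monotone :
    ∃ (r n : ℕ) (ρ : ℝ), 0 < n ∧ 0 < r ∧ 0 < ρ ∧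
      ∃ (H : Matrix (Fin n) (Fin r) ℂ) (h : Fin r → ℂ),
        Real.logb 2
            ((1 + ((ρ * r / (n + 1) : ℝ) : ℂ) •
                ((Matrix.of (Fin.snoc (fun i => H i) h))ᴴ *
                  (Matrix.of (Fin.snoc (fun i => H i) h)))).det.re) <
          Real.logb 2
            ((1 + ((ρ * r / n : ℝ) : ℂ) • (Hᴴ * H)).det.re) := by
  refine ⟨1, 1, 1, one_pos, one_pos, one_pos, 1, 0, ?_⟩
  have h1 : ((1 + ((1 * (1:ℕ) / ((1:ℕ) + 1) : ℝ) : ℂ) •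
      ((Matrix.of (Fin.snoc (fun i => (1 : Matrix (Fin 1) (Fin 1) ℂ) i) (0 : Fin 1 → ℂ)))ᴴ *
        (Matrix.of (Fin.snoc (fun i => (1 : Matrix (Fin 1) (Fin 1) ℂ) i) (0 : Fin 1 → ℂ))))).det.re) =
      (3/2 : ℝ) := by
    simp [Matrix.det_fin_one, Matrix.mul_apply, Fin.sum_univ_two, Matrix.one_apply,
      Fin.snoc, Fin.castPred_zero, Matrix.conjTranspose_apply]
    norm_num
  have h2 : ((1 + ((1 * (1:ℕ) / (1:ℕ) : ℝ) : ℂ) •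
      ((1 : Matrix (Fin 1) (Fin 1) ℂ)ᴴ * 1)).det.re) = (2 : ℝ) := by
    simp [Matrix.det_fin_one, Matrix.one_apply]
    norm_num
  rw [h1, h2]
  exact Real.logb_lt_logb (by norm_num) (by norm_num) (by norm_num)
end

section
/- Let A and B be r×r positive semidefinite Hermitian matrices. Then det(I + A + B) ≤ det(I + A)·det(I + B). -/
/-!
With `X = 1 + A` and `S = √B`, Sylvester's identity `det (1 + M N) = det (1 + N M)` gives
`det (X + B) = det X * det (1 + S X⁻¹ S)`. Since `1 ≤ X` in the Loewner order, `X⁻¹ ≤ 1`, hence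
`S X⁻¹ S ≤ S S = B`. The determinant is monotone on positive semidefinite matrices below a positive
definite one: conjugating by `Q^{-1/2}` reduces `P ≤ Q` to `R ≤ 1`, where all eigenvalues lie in
`[0, 1]`.
-/
open Matrix ComplexOrder
open scoped MatrixOrder

namespace Matrix

variable {n 𝕜 : Type*} [Fintype n] [DecidableEq n] [RCLike 𝕜]

lemma PosSemidef.det_le_one_of_le_one {R : Matrix n n 𝕜} (hR : R.PosSemidef) (h : R ≤ 1) :
    R.det ≤ 1 := by
  have hspec := (CFC.le_one_iff (R := ℝ) R hR.isHermitian.isSelfAdjoint).mp h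
  rw [hR.isHermitian.det_eq_prod_eigenvalues, ← RCLike.ofReal_prod, ← RCLike.ofReal_one,
    RCLike.ofReal_le_ofReal]
  exact Finset.prod_le_one (fun i _ => hR.eigenvalues_nonneg i)
    (fun i _ => hspec _ (hR.isHermitian.eigenvalues_mem_spectrum_real i))

lemma isHermitian_inv_sqrt (Q : Matrix n n 𝕜) : (CFC.sqrt Q)⁻¹.IsHermitian :=
  (CFC.sqrt_nonneg Q).posSemidef.inv.isHermitian

lemma PosDef.isUnit_det_sqrt {Q : Matrix n n 𝕜} (hQ : Q.PosDef) : IsUnit (CFC.sqrt Q).det :=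
  (isUnit_iff_isUnit_det _).mp <| CFC.isUnit_sqrt_iff_isStrictlyPositive.mpr hQ.isStrictlyPositive

lemma PosDef.inv_sqrt_mul_self_mul_inv_sqrt {Q : Matrix n n 𝕜} (hQ : Q.PosDef) :
    (CFC.sqrt Q)⁻¹ * Q * (CFC.sqrt Q)⁻¹ = 1 := by
  nth_rw 2 [← CFC.sqrt_mul_sqrt_self Q hQ.posSemidef.nonneg]
  rw [← mul_assoc, nonsing_inv_mul _ hQ.isUnit_det_sqrt, one_mul,
    mul_nonsing_inv _ hQ.isUnit_det_sqrt]

lemma PosSemidef.det_le_det_of_le {P Q : Matrix n n 𝕜} (hP : P.PosSemidef) (hQ : Q.PosDef)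
    (h : P ≤ Q) : P.det ≤ Q.det := by
  set T := (CFC.sqrt Q)⁻¹
  have hT : T.IsHermitian := isHermitian_inv_sqrt Q
  have hTQT : (T * Q * T).det = 1 := by rw [hQ.inv_sqrt_mul_self_mul_inv_sqrt, det_one]
  have hTPT : (T * P * T).det ≤ 1 := by
    refine PosSemidef.det_le_one_of_le_one ?_ ?_
    · simpa only [hT.eq] using hP.conjTranspose_mul_mul_same T
    · simpa only [T, hQ.inv_sqrt_mul_self_mul_inv_sqrt] using
        hT.isSelfAdjoint.conjugate_le_conjugate h
  rw [det_mul, det_mul] at hTQT hTPT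
  calc P.det = Q.det * (T.det * P.det * T.det) := by linear_combination -P.det * hTQT
    _ ≤ Q.det * 1 := mul_le_mul_of_nonneg_left hTPT hQ.det_pos.le
    _ = Q.det := mul_one _

lemma PosDef.inv_le_one_of_one_le {X : Matrix n n 𝕜} (hX : X.PosDef) (h : 1 ≤ X) :
    X⁻¹ ≤ 1 := by
  have h' := (isHermitian_inv_sqrt X).isSelfAdjoint.conjugate_le_conjugate h
  rwa [hX.inv_sqrt_mul_self_mul_inv_sqrt, mul_one, ← mul_inv_rev,
    CFC.sqrt_mul_sqrt_self X hX.posSemidef.nonneg] at h'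

lemma det_add_le_det_mul_det_one_add {X B : Matrix n n 𝕜} (hX : 1 ≤ X) (hB : B.PosSemidef) :
    (X + B).det ≤ X.det * (1 + B).det := by
  have hXpd : X.PosDef := by simpa using PosDef.one.add_posSemidef hX
  set S := CFC.sqrt B
  have hS : S.IsHermitian := (CFC.sqrt_nonneg B).posSemidef.isHermitian
  have hSS : S * S = B := CFC.sqrt_mul_sqrt_self B hB.nonneg
  have hfactor : (X + B).det = X.det * (1 + S * X⁻¹ * S).det := by
    calc (X + B).det = (X * (1 + X⁻¹ * S * S)).det := by
          rw [mul_add, mul_one, mul_assoc,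
            mul_nonsing_inv_cancel_left _ _ hXpd.det_pos.ne'.isUnit, hSS]
      _ = X.det * (1 + S * X⁻¹ * S).det := by
          rw [det_mul, det_one_add_mul_comm, mul_assoc]
  have hM : (S * X⁻¹ * S).PosSemidef := by
    simpa only [hS.eq] using hXpd.inv.posSemidef.conjTranspose_mul_mul_same S
  have hMB : S * X⁻¹ * S ≤ B := by
    simpa only [hSS, mul_one] using
      hS.isSelfAdjoint.conjugate_le_conjugate (hXpd.inv_le_one_of_one_le hX)
  have hdet : (1 + S * X⁻¹ * S).det ≤ (1 + B).det :=
    (PosSemidef.one.add hM).det_le_det_of_le (PosDef.one.add_posSemidef hB) (add_le_add_right hMB 1)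
  rw [hfactor]
  exact mul_le_mul_of_nonneg_left hdet hXpd.det_pos.le

end Matrix

/-- Subadditivity over disjoint antenna clusters: for PSD Hermitian `A`, `B`,
`det (I + A + B) ≤ det (I + A) · det (I + B)`. -/
theorem det_one_add_add_le (r : ℕ) (A B : Matrix (Fin r) (Fin r) ℂ)
    (hA : A.PosSemidef) (hB : B.PosSemidef) :
    (1 + A + B).det ≤ (1 + A).det * (1 + B).det :=
  det_add_le_det_mul_det_one_add (le_add_of_nonneg_right hA.nonneg) hB
end

section
/- Let A be an r×r Hermitian positive semidefinite matrix and E an r×r Hermitian matrix with operator norm ‖E‖ ≤ ε such that A + E is positive semidefinite. Then |log det(I + A + E) − log det(I + A)| ≤ r·log(1 + ε). -/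
/-!
In the Loewner order the norm bound says `-ε ≤ E ≤ ε`. Since `1 ≤ 1 + A` and `1 ≤ 1 + A + E`,
this gives `1 + A + E ≤ (1 + ε) (1 + A)` and `1 + A ≤ (1 + ε) (1 + A + E)`. The determinant is
monotone on positive definite matrices, so each determinant is at most `(1 + ε) ^ r` times the
other, and taking logarithms gives the bound.
-/

open Matrix ComplexOrder
open scoped MatrixOrder

namespace Matrix

variable {n 𝕜 : Type*} [Fintype n] [DecidableEq n] [RCLike 𝕜]

open scoped Matrix.Norms.L2Operator in
lemma IsHermitian.algebraMap_bounds_of_norm_le {E : Matrix n n ℂ} (hE : E.IsHermitian) {ε : ℝ}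
    (h : ‖E‖ ≤ ε) : -algebraMap ℝ _ ε ≤ E ∧ E ≤ algebraMap ℝ _ ε := by
  have hE' : IsSelfAdjoint E := hE
  have hε : algebraMap ℝ (Matrix n n ℂ) ‖E‖ ≤ algebraMap ℝ _ ε := algebraMap_mono _ h
  exact ⟨(neg_le_neg hε).trans hE'.neg_algebraMap_norm_le_self,
    hE'.le_algebraMap_norm_self.trans hε⟩

lemma one_le_det_of_one_le {M : Matrix n n 𝕜} (h : 1 ≤ M) : 1 ≤ M.det := by
  have hM : M.IsHermitian := by
    simpa using (le_iff.mp h).isHermitian.add isHermitian_one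
  have one_le_eigenvalues : ∀ i, 1 ≤ hM.eigenvalues i := fun i =>
    (algebraMap_le_iff_le_spectrum (a := M) (r := (1 : ℝ)) hM).mp (by simpa using h) _
      (hM.eigenvalues_mem_spectrum_real i)
  rw [hM.det_eq_prod_eigenvalues]
  exact_mod_cast Finset.one_le_prod fun i _ => one_le_eigenvalues i

lemma PosDef.det_le_det_of_le {X Y : Matrix n n 𝕜} (hX : X.PosDef) (h : X ≤ Y) :
    X.det ≤ Y.det := by
  -- Conjugating by `T = X ^ (-1/2)` reduces the claim to `1 ≤ det (T * Y * T)`.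
  set S := CFC.sqrt X
  have hSS : S * S = X := CFC.sqrt_mul_sqrt_self X hX.posSemidef.nonneg
  have hS : Sᴴ = S := (CFC.sqrt_nonneg X).isSelfAdjoint
  have hSdet : IsUnit S.det :=
    (isUnit_iff_isUnit_det S).mp (isUnit_of_mul_isUnit_left (hSS ▸ hX.isUnit))
  set T := S⁻¹
  have hTS : T * S = 1 := nonsing_inv_mul S hSdet
  have hST : S * T = 1 := mul_nonsing_inv S hSdet
  have hT : star T = T := by rw [star_eq_conjTranspose, conjTranspose_nonsing_inv, hS]
  have hTXT : T * X * T = 1 := by rw [← hSS, ← mul_assoc, hTS, one_mul, hST]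
  have one_le_TYT : 1 ≤ T * Y * T := by
    simpa only [hT, hTXT] using star_left_conjugate_le_conjugate h T
  have hY : Y = S * (T * Y * T) * S := by
    simp only [← mul_assoc, hST, one_mul]
    rw [mul_assoc, hTS, mul_one]
  have hdetY : Y.det = X.det * (T * Y * T).det := by
    rw [← hSS]
    conv_lhs => rw [hY]
    simp only [det_mul]
    ring
  rw [hdetY]
  exact le_mul_of_one_le_right hX.det_pos.le (one_le_det_of_one_le one_le_TYT)

lemma det_le_one_add_pow_mul_det {X Y : Matrix n n 𝕜} (hX : 1 ≤ X) (hY : 1 ≤ Y) {ε : ℝ}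
    (hε : 0 ≤ ε) (h : Y ≤ X + algebraMap ℝ _ ε) :
    Y.det ≤ (((1 + ε) ^ Fintype.card n : ℝ) : 𝕜) * X.det := by
  have hYpos : Y.PosDef := by
    simpa using PosDef.one.add_posSemidef (le_iff.mp hY)
  have hε1 : algebraMap ℝ (Matrix n n 𝕜) ε ≤ ε • X := by
    rw [Algebra.algebraMap_eq_smul_one]
    exact smul_le_smul_of_nonneg_left hX hε
  have hYX : Y ≤ ((1 + ε : ℝ) : 𝕜) • X := by
    calc Y ≤ X + algebraMap ℝ _ ε := h
      _ ≤ X + ε • X := by gcongr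
      _ = ((1 + ε : ℝ) : 𝕜) • X := by rw [← RCLike.real_smul_eq_coe_smul, add_smul, one_smul]
  simpa [det_smul] using hYpos.det_le_det_of_le hYX

end Matrix

lemma Real.abs_log_sub_log_le_log_of_le_mul {x y K : ℝ} (hx : 0 < x) (hy : 0 < y)
    (hxy : x ≤ K * y) (hyx : y ≤ K * x) : |Real.log x - Real.log y| ≤ Real.log K := by
  have hK : 0 < K := pos_of_mul_pos_left (hx.trans_le hxy) hy.le
  have h₁ := Real.log_le_log hx hxy
  have h₂ := Real.log_le_log hy hyx
  rw [Real.log_mul hK.ne' hy.ne'] at h₁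
  rw [Real.log_mul hK.ne' hx.ne'] at h₂
  exact abs_sub_le_iff.mpr ⟨by linarith, by linarith⟩

lemma Complex.re_le_ofReal_mul_re {z w : ℂ} {K : ℝ} (h : z ≤ K * w) : z.re ≤ K * w.re := by
  simpa using (Complex.le_def.mp h).1

/-- Continuity of log-det capacity under CSI perturbation: if `A` is PSD,
`E` is Hermitian with operator norm at most `ε`, and `A + E` is PSD, then
`|log det (I + A + E) − log det (I + A)| ≤ r·log (1 + ε)`. -/
theorem logdet_perturbation_bound (r : ℕ)
    (A E : Matrix (Fin r) (Fin r) ℂ) (hA : A.PosSemidef)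
    (hE : E.IsHermitian) (hAE : (A + E).PosSemidef)
    (ε : ℝ) (hε : 0 ≤ ε)
    (hnorm : ‖(Matrix.toEuclideanLin E).toContinuousLinearMap‖ ≤ ε) :
    |Real.log ((1 + A + E).det.re) - Real.log ((1 + A).det.re)| ≤
      r * Real.log (1 + ε) := by
  -- `hnorm` is `‖E‖ ≤ ε` for the L2 operator norm on matrices, by definition of that norm.
  obtain ⟨hE_lower, hE_upper⟩ := hE.algebraMap_bounds_of_norm_le hnorm
  have hB : 1 ≤ 1 + A := le_add_of_nonneg_right hA.nonneg
  have hC : 1 ≤ 1 + A + E := by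
    rw [add_assoc]
    exact le_add_of_nonneg_right hAE.nonneg
  have hCB := det_le_one_add_pow_mul_det hB hC hε (by gcongr)
  have hBC := det_le_one_add_pow_mul_det hC hB hε (by
    rw [add_assoc]; exact le_add_of_nonneg_right (neg_le_iff_add_nonneg.mp hE_lower))
  have hdet_pos : ∀ {M : Matrix (Fin r) (Fin r) ℂ}, 1 ≤ M → 0 < M.det.re := fun hM =>
    zero_lt_one.trans_le (by simpa using (Complex.le_def.mp (one_le_det_of_one_le hM)).1)
  rw [Fintype.card_fin] at hCB hBC
  rw [← Real.log_pow]
  exact Real.abs_log_sub_log_le_log_of_le_mul (hdet_pos hC) (hdet_pos hB)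
    (Complex.re_le_ofReal_mul_re hCB) (Complex.re_le_ofReal_mul_re hBC)
end
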